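/- For every λ ∈ k with λ ∉ {0, 1, ω, ω̄}, the set Z(dGA[λ]) of common zeros in P²(k) of the three partial derivatives ∂GA[λ]/∂X, ∂GA[λ]/∂Y, ∂GA[λ]/∂Z is exactly the 21-point set Z_A(λ). -/
import Mathlib


open MvPolynomial

/-- The sextic polynomial `GA[λ] = XYZ(X+Y+Z)(X² + Y² + (λ²+λ)Z² + XY + YZ + ZX)`. -/
noncomputable def GA (k : Type*) [CommRing k] (l : k) : MvPolynomial (Fin 3) k :=
  X 0 * X 1 * X 2 * (X 0 + X 1 + X 2) *
    (X 0 ^ 2 + X 1 ^ 2 + C (l ^ 2 + l) * X 2 ^ 2 + X 0 * X 1 + X 1 * X 2 + X 2 * X 0)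

/-- The 21 coordinate vectors of the points of `Z_A(λ)`. -/
def ZAvec (k : Type*) [CommRing k] (ω l : k) : Set (Fin 3 → k) :=
  {![1, ω, 0], ![1, ω + 1, 0], ![l + 1, l + 1, 1], ![l + 1, l, 1], ![l, l, 1],
   ![l, l + 1, 1], ![l + 1, 1, 1], ![1, l + 1, 1], ![1, 1, 1], ![0, l, 1],
   ![0, 1, 1], ![0, 1, 0], ![1, 1, 0], ![l, 1, 1], ![1, l, 1],
   ![0, l + 1, 1], ![l, 0, 1], ![1, 0, 0], ![1, 0, 1], ![0, 0, 1], ![l + 1, 0, 1]}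

/-- The 21-point set `Z_A(λ)` in the projective plane `P²(k)`. -/
def ZApts (k : Type*) [Field k] (ω l : k) : Set (Projectivization k (Fin 3 → k)) :=
  {P | ∃ v ∈ ZAvec k ω l, ∃ hv : v ≠ 0, P = Projectivization.mk k v hv}


section Aux

variable {k : Type*} [Field k] [CharP k 2]

theorem ev0 (l : k) (v : Fin 3 → k) :
    eval v (pderiv 0 (GA k l)) =
      v 1 * v 2 * (v 1 + v 2) * (v 1 + l * v 2) * (v 1 + (l+1) * v 2) := by
  have h2 : (2:k) = 0 := CharTwo.two_eq_zero
  simp only [GA, pderiv_mul]; simp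
  linear_combination ((-1)*v 1^2*v 2^3*l + (-1)*v 1^3*v 2^2*l + v 0*v 1*v 2^3 + v 0*v 1*v 2^3*l + v 0*v 1*v 2^3*l^2 + 3*v 0*v 1^2*v 2^2 + 2*v 0*v 1^3*v 2 + 3*v 0^2*v 1*v 2^2 + 3*v 0^2*v 1^2*v 2 + 2*v 0^3*v 1*v 2) * h2

theorem ev1 (l : k) (v : Fin 3 → k) :
    eval v (pderiv 1 (GA k l)) =
      v 0 * v 2 * (v 0 + v 2) * (v 0 + l * v 2) * (v 0 + (l+1) * v 2) := by
  have h2 : (2:k) = 0 := CharTwo.two_eq_zero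
  simp only [GA, pderiv_mul]; simp
  linear_combination (v 0*v 1*v 2^3 + v 0*v 1*v 2^3*l + v 0*v 1*v 2^3*l^2 + 3*v 0*v 1^2*v 2^2 + 2*v 0*v 1^3*v 2 + (-1)*v 0^2*v 2^3*l + 3*v 0^2*v 1*v 2^2 + 3*v 0^2*v 1^2*v 2 + (-1)*v 0^3*v 2^2*l + 2*v 0^3*v 1*v 2) * h2

theorem ev2 (l : k) (v : Fin 3 → k) :
    eval v (pderiv 2 (GA k l)) =
      v 0 * v 1 * (v 0 + v 1) * (v 0^2 + v 0 * v 1 + v 1^2 + (l^2+l+1) * v 2^2) := by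
  have h2 : (2:k) = 0 := CharTwo.two_eq_zero
  simp only [GA, pderiv_mul]; simp
  linear_combination (2*v 0*v 1*v 2^3*l + 2*v 0*v 1*v 2^3*l^2 + v 0*v 1^2*v 2^2 + v 0*v 1^2*v 2^2*l + v 0*v 1^2*v 2^2*l^2 + 2*v 0*v 1^3*v 2 + v 0^2*v 1*v 2^2 + v 0^2*v 1*v 2^2*l + v 0^2*v 1*v 2^2*l^2 + 3*v 0^2*v 1^2*v 2 + 2*v 0^3*v 1*v 2) * h2

theorem good_of (l : k) (v : Fin 3 → k)
    (H0 : v 1 * v 2 * (v 1 + v 2) * (v 1 + l * v 2) * (v 1 + (l+1) * v 2) = 0)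
    (H1 : v 0 * v 2 * (v 0 + v 2) * (v 0 + l * v 2) * (v 0 + (l+1) * v 2) = 0)
    (H2 : v 0 * v 1 * (v 0 + v 1) * (v 0^2 + v 0 * v 1 + v 1^2 + (l^2+l+1) * v 2^2) = 0) :
    ∀ i : Fin 3, eval v (pderiv i (GA k l)) = 0 := by
  intro i
  fin_cases i
  · rw [show (⟨0, by norm_num⟩ : Fin 3) = 0 from rfl, ev0]; exact H0
  · rw [show (⟨1, by norm_num⟩ : Fin 3) = 1 from rfl, ev1]; exact H1
  · rw [show (⟨2, by norm_num⟩ : Fin 3) = 2 from rfl, ev2]; exact H2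

theorem good_smul (l : k) (c : k) (v : Fin 3 → k)
    (h : ∀ i : Fin 3, eval v (pderiv i (GA k l)) = 0) :
    ∀ i : Fin 3, eval (c • v) (pderiv i (GA k l)) = 0 := by
  have H0 := h 0; have H1 := h 1; have H2 := h 2
  rw [ev0] at H0; rw [ev1] at H1; rw [ev2] at H2
  refine good_of l _ ?_ ?_ ?_ <;> simp only [Pi.smul_apply, smul_eq_mul]
  · linear_combination (c^5) * H0
  · linear_combination (c^5) * H1
  · linear_combination (c^5) * H2

theorem good_mem (ω l : k) (hω : ω ^ 2 + ω + 1 = 0) (v : Fin 3 → k)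
    (hv : v ∈ ZAvec k ω l) : ∀ i : Fin 3, eval v (pderiv i (GA k l)) = 0 := by
  have h2 : (2:k) = 0 := CharTwo.two_eq_zero
  simp only [ZAvec, Set.mem_insert_iff, Set.mem_singleton_iff] at hv
  rcases hv with rfl|rfl|rfl|rfl|rfl|rfl|rfl|rfl|rfl|rfl|rfl|rfl|rfl|rfl|rfl|rfl|rfl|rfl|rfl|rfl|rfl
  · exact good_of l _ (by simp only [Matrix.cons_val_zero, Matrix.cons_val_one, Matrix.head_cons, Matrix.cons_val_two, Matrix.tail_cons]; ring) (by simp only [Matrix.cons_val_zero, Matrix.cons_val_one, Matrix.head_cons, Matrix.cons_val_two, Matrix.tail_cons]; ring) (by simp only [Matrix.cons_val_zero, Matrix.cons_val_one, Matrix.head_cons, Matrix.cons_val_two, Matrix.tail_cons]; linear_combination (ω + ω^2) * hω)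
  · exact good_of l _ (by simp only [Matrix.cons_val_zero, Matrix.cons_val_one, Matrix.head_cons, Matrix.cons_val_two, Matrix.tail_cons]; ring) (by simp only [Matrix.cons_val_zero, Matrix.cons_val_one, Matrix.head_cons, Matrix.cons_val_two, Matrix.tail_cons]; ring) (by simp only [Matrix.cons_val_zero, Matrix.cons_val_one, Matrix.head_cons, Matrix.cons_val_two, Matrix.tail_cons]; linear_combination ((-1) + ω) * h2 + (8 + 5*ω + ω^2) * hω)
  · exact good_of l _ (by simp only [Matrix.cons_val_zero, Matrix.cons_val_one, Matrix.head_cons, Matrix.cons_val_two, Matrix.tail_cons]; linear_combination (2 + 9*l + 14*l^2 + 9*l^3 + 2*l^4) * h2) (by simp only [Matrix.cons_val_zero, Matrix.cons_val_one, Matrix.head_cons, Matrix.cons_val_two, Matrix.tail_cons]; linear_combination (2 + 9*l + 14*l^2 + 9*l^3 + 2*l^4) * h2) (by simp only [Matrix.cons_val_zero, Matrix.cons_val_one, Matrix.head_cons, Matrix.cons_val_two, Matrix.tail_cons]; linear_combination (4 + 19*l + 37*l^2 + 37*l^3 + 19*l^4 + 4*l^5) * h2)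
  · exact good_of l _ (by simp only [Matrix.cons_val_zero, Matrix.cons_val_one, Matrix.head_cons, Matrix.cons_val_two, Matrix.tail_cons]; linear_combination (l^2 + 3*l^3 + 2*l^4) * h2) (by simp only [Matrix.cons_val_zero, Matrix.cons_val_one, Matrix.head_cons, Matrix.cons_val_two, Matrix.tail_cons]; linear_combination (2 + 9*l + 14*l^2 + 9*l^3 + 2*l^4) * h2) (by simp only [Matrix.cons_val_zero, Matrix.cons_val_one, Matrix.head_cons, Matrix.cons_val_two, Matrix.tail_cons]; linear_combination (l + 5*l^2 + 10*l^3 + 10*l^4 + 4*l^5) * h2)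
  · exact good_of l _ (by simp only [Matrix.cons_val_zero, Matrix.cons_val_one, Matrix.head_cons, Matrix.cons_val_two, Matrix.tail_cons]; linear_combination (l^2 + 3*l^3 + 2*l^4) * h2) (by simp only [Matrix.cons_val_zero, Matrix.cons_val_one, Matrix.head_cons, Matrix.cons_val_two, Matrix.tail_cons]; linear_combination (l^2 + 3*l^3 + 2*l^4) * h2) (by simp only [Matrix.cons_val_zero, Matrix.cons_val_one, Matrix.head_cons, Matrix.cons_val_two, Matrix.tail_cons]; linear_combination (l^3 + l^4 + 4*l^5) * h2)
  · exact good_of l _ (by simp only [Matrix.cons_val_zero, Matrix.cons_val_one, Matrix.head_cons, Matrix.cons_val_two, Matrix.tail_cons]; linear_combination (2 + 9*l + 14*l^2 + 9*l^3 + 2*l^4) * h2) (by simp only [Matrix.cons_val_zero, Matrix.cons_val_one, Matrix.head_cons, Matrix.cons_val_two, Matrix.tail_cons]; linear_combination (l^2 + 3*l^3 + 2*l^4) * h2) (by simp only [Matrix.cons_val_zero, Matrix.cons_val_one, Matrix.head_cons, Matrix.cons_val_two, Matrix.tail_cons]; linear_combination (l + 5*l^2 + 10*l^3 + 10*l^4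 + 4*l^5) * h2)
  · exact good_of l _ (by simp only [Matrix.cons_val_zero, Matrix.cons_val_one, Matrix.head_cons, Matrix.cons_val_two, Matrix.tail_cons]; linear_combination (2 + 3*l + l^2) * h2) (by simp only [Matrix.cons_val_zero, Matrix.cons_val_one, Matrix.head_cons, Matrix.cons_val_two, Matrix.tail_cons]; linear_combination (2 + 9*l + 14*l^2 + 9*l^3 + 2*l^4) * h2) (by simp only [Matrix.cons_val_zero, Matrix.cons_val_one, Matrix.head_cons, Matrix.cons_val_two, Matrix.tail_cons]; linear_combination (4 + 10*l + 10*l^2 + 5*l^3 + l^4) * h2)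
  · exact good_of l _ (by simp only [Matrix.cons_val_zero, Matrix.cons_val_one, Matrix.head_cons, Matrix.cons_val_two, Matrix.tail_cons]; linear_combination (2 + 9*l + 14*l^2 + 9*l^3 + 2*l^4) * h2) (by simp only [Matrix.cons_val_zero, Matrix.cons_val_one, Matrix.head_cons, Matrix.cons_val_two, Matrix.tail_cons]; linear_combination (2 + 3*l + l^2) * h2) (by simp only [Matrix.cons_val_zero, Matrix.cons_val_one, Matrix.head_cons, Matrix.cons_val_two, Matrix.tail_cons]; linear_combination (4 + 10*l + 10*l^2 + 5*l^3 + l^4) * h2)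
  · exact good_of l _ (by simp only [Matrix.cons_val_zero, Matrix.cons_val_one, Matrix.head_cons, Matrix.cons_val_two, Matrix.tail_cons]; linear_combination (2 + 3*l + l^2) * h2) (by simp only [Matrix.cons_val_zero, Matrix.cons_val_one, Matrix.head_cons, Matrix.cons_val_two, Matrix.tail_cons]; linear_combination (2 + 3*l + l^2) * h2) (by simp only [Matrix.cons_val_zero, Matrix.cons_val_one, Matrix.head_cons, Matrix.cons_val_two, Matrix.tail_cons]; linear_combination (4 + l + l^2) * h2)
  · exact good_of l _ (by simp only [Matrix.cons_val_zero, Matrix.cons_val_one, Matrix.head_cons, Matrix.cons_val_two, Matrix.tail_cons]; linear_combination (l^2 + 3*l^3 + 2*l^4) * h2) (by simp only [Matrix.cons_val_zero, Matrix.cons_val_one, Matrix.head_cons, Matrix.cons_val_two, Matrix.tail_cons]; ring) (by simp only [Matrix.cons_val_zero, Matrix.cons_val_one, Matrix.head_cons, Matrix.cons_val_two, Matrix.tail_cons]; ring)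
  · exact good_of l _ (by simp only [Matrix.cons_val_zero, Matrix.cons_val_one, Matrix.head_cons, Matrix.cons_val_two, Matrix.tail_cons]; linear_combination (2 + 3*l + l^2) * h2) (by simp only [Matrix.cons_val_zero, Matrix.cons_val_one, Matrix.head_cons, Matrix.cons_val_two, Matrix.tail_cons]; ring) (by simp only [Matrix.cons_val_zero, Matrix.cons_val_one, Matrix.head_cons, Matrix.cons_val_two, Matrix.tail_cons]; ring)
  · exact good_of l _ (by simp only [Matrix.cons_val_zero, Matrix.cons_val_one, Matrix.head_cons, Matrix.cons_val_two, Matrix.tail_cons]; ring) (by simp only [Matrix.cons_val_zero, Matrix.cons_val_one, Matrix.head_cons, Matrix.cons_val_two, Matrix.tail_cons]; ring) (by simp only [Matrix.cons_val_zero, Matrix.cons_val_one, Matrix.head_cons, Matrix.cons_val_two, Matrix.tail_cons]; ring)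
  · exact good_of l _ (by simp only [Matrix.cons_val_zero, Matrix.cons_val_one, Matrix.head_cons, Matrix.cons_val_two, Matrix.tail_cons]; ring) (by simp only [Matrix.cons_val_zero, Matrix.cons_val_one, Matrix.head_cons, Matrix.cons_val_two, Matrix.tail_cons]; ring) (by simp only [Matrix.cons_val_zero, Matrix.cons_val_one, Matrix.head_cons, Matrix.cons_val_two, Matrix.tail_cons]; linear_combination (3) * h2)
  · exact good_of l _ (by simp only [Matrix.cons_val_zero, Matrix.cons_val_one, Matrix.head_cons, Matrix.cons_val_two, Matrix.tail_cons]; linear_combination (2 + 3*l + l^2) * h2) (by simp only [Matrix.cons_val_zero, Matrix.cons_val_one, Matrix.head_cons, Matrix.cons_val_two, Matrix.tail_cons]; linear_combination (l^2 + 3*l^3 + 2*l^4) * h2) (by simp only [Matrix.cons_val_zero, Matrix.cons_val_one, Matrix.head_cons, Matrix.cons_val_two, Matrix.tail_cons]; linear_combination (l + 2*l^2 + 2*l^3 + l^4) * h2)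
  · exact good_of l _ (by simp only [Matrix.cons_val_zero, Matrix.cons_val_one, Matrix.head_cons, Matrix.cons_val_two, Matrix.tail_cons]; linear_combination (l^2 + 3*l^3 + 2*l^4) * h2) (by simp only [Matrix.cons_val_zero, Matrix.cons_val_one, Matrix.head_cons, Matrix.cons_val_two, Matrix.tail_cons]; linear_combination (2 + 3*l + l^2) * h2) (by simp only [Matrix.cons_val_zero, Matrix.cons_val_one, Matrix.head_cons, Matrix.cons_val_two, Matrix.tail_cons]; linear_combination (l + 2*l^2 + 2*l^3 + l^4) * h2)
  · exact good_of l _ (by simp only [Matrix.cons_val_zero, Matrix.cons_val_one, Matrix.head_cons, Matrix.cons_val_two, Matrix.tail_cons]; linear_combination (2 + 9*l + 14*l^2 + 9*l^3 + 2*l^4) * h2) (by simp only [Matrix.cons_val_zero, Matrix.cons_val_one, Matrix.head_cons, Matrix.cons_val_two, Matrix.tail_cons]; ring) (by simp only [Matrix.cons_val_zero, Matrix.cons_val_one, Matrix.head_cons, Matrix.cons_val_two, Matrix.tail_cons]; ring)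
  · exact good_of l _ (by simp only [Matrix.cons_val_zero, Matrix.cons_val_one, Matrix.head_cons, Matrix.cons_val_two, Matrix.tail_cons]; ring) (by simp only [Matrix.cons_val_zero, Matrix.cons_val_one, Matrix.head_cons, Matrix.cons_val_two, Matrix.tail_cons]; linear_combination (l^2 + 3*l^3 + 2*l^4) * h2) (by simp only [Matrix.cons_val_zero, Matrix.cons_val_one, Matrix.head_cons, Matrix.cons_val_two, Matrix.tail_cons]; ring)
  · exact good_of l _ (by simp only [Matrix.cons_val_zero, Matrix.cons_val_one, Matrix.head_cons, Matrix.cons_val_two, Matrix.tail_cons]; ring) (by simp only [Matrix.cons_val_zero, Matrix.cons_val_one, Matrix.head_cons, Matrix.cons_val_two, Matrix.tail_cons]; ring) (by simp only [Matrix.cons_val_zero, Matrix.cons_val_one, Matrix.head_cons, Matrix.cons_val_two, Matrix.tail_cons]; ring)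
  · exact good_of l _ (by simp only [Matrix.cons_val_zero, Matrix.cons_val_one, Matrix.head_cons, Matrix.cons_val_two, Matrix.tail_cons]; ring) (by simp only [Matrix.cons_val_zero, Matrix.cons_val_one, Matrix.head_cons, Matrix.cons_val_two, Matrix.tail_cons]; linear_combination (2 + 3*l + l^2) * h2) (by simp only [Matrix.cons_val_zero, Matrix.cons_val_one, Matrix.head_cons, Matrix.cons_val_two, Matrix.tail_cons]; ring)
  · exact good_of l _ (by simp only [Matrix.cons_val_zero, Matrix.cons_val_one, Matrix.head_cons, Matrix.cons_val_two, Matrix.tail_cons]; ring) (by simp only [Matrix.cons_val_zero, Matrix.cons_val_one, Matrix.head_cons, Matrix.cons_val_two, Matrix.tail_cons]; ring) (by simp only [Matrix.cons_val_zero, Matrix.cons_val_one, Matrix.head_cons, Matrix.cons_val_two, Matrix.tail_cons]; ring)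
  · exact good_of l _ (by simp only [Matrix.cons_val_zero, Matrix.cons_val_one, Matrix.head_cons, Matrix.cons_val_two, Matrix.tail_cons]; ring) (by simp only [Matrix.cons_val_zero, Matrix.cons_val_one, Matrix.head_cons, Matrix.cons_val_two, Matrix.tail_cons]; linear_combination (2 + 9*l + 14*l^2 + 9*l^3 + 2*l^4) * h2) (by simp only [Matrix.cons_val_zero, Matrix.cons_val_one, Matrix.head_cons, Matrix.cons_val_two, Matrix.tail_cons]; ring)

theorem root4 (l t s : k) (hs : s ≠ 0)
    (h : t * s * (t + s) * (t + l * s) * (t + (l+1) * s) = 0) :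
    ∃ b, (b = 0 ∨ b = 1 ∨ b = l ∨ b = l + 1) ∧ t = b * s := by
  have h2 : (2:k) = 0 := CharTwo.two_eq_zero
  rcases mul_eq_zero.mp h with h' | h4
  · rcases mul_eq_zero.mp h' with h'' | hl
    · rcases mul_eq_zero.mp h'' with h''' | hsum
      · rcases mul_eq_zero.mp h''' with ht | hs0
        · exact ⟨0, Or.inl rfl, by rw [ht, zero_mul]⟩
        · exact absurd hs0 hs
      · exact ⟨1, Or.inr (Or.inl rfl), by linear_combination hsum - s * h2⟩
    · exact ⟨l, Or.inr (Or.inr (Or.inl rfl)), by linear_combination hl - l * s * h2⟩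
  · exact ⟨l + 1, Or.inr (Or.inr (Or.inr rfl)), by linear_combination h4 - (l+1) * s * h2⟩

theorem eq_smul (v : Fin 3 → k) (a c0 c1 c2 : k)
    (e0 : v 0 = a * c0) (e1 : v 1 = a * c1) (e2 : v 2 = a * c2) :
    v = a • ![c0, c1, c2] := by
  funext j; fin_cases j
  · simpa using e0
  · simpa using e1
  · simpa using e2

theorem mem_pts (ω l : k) (P : Projectivization k (Fin 3 → k)) (w : Fin 3 → k)
    (hmem : w ∈ ZAvec k ω l) (hw : w ≠ 0) (a : k) (ha : a ≠ 0)
    (hrep : P.rep = a • w) : P ∈ ZApts k ω l := by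
  refine ⟨w, hmem, hw, ?_⟩
  exact (Projectivization.mk_rep P).symm.trans
    ((Projectivization.mk_eq_mk_iff k _ _ P.rep_nonzero hw).2
      ⟨Units.mk0 a ha, by rw [hrep]; rfl⟩)

/-- normal form for representatives -/
def Nrm (v : Fin 3 → k) : Prop :=
  v 2 = 1 ∨ (v 2 = 0 ∧ v 0 = 1) ∨ (v 2 = 0 ∧ v 0 = 0 ∧ v 1 = 1)

theorem nrm_ne_zero (v : Fin 3 → k) (h : Nrm v) : v ≠ 0 := by
  rcases h with h | ⟨_, h⟩ | ⟨_, _, h⟩ <;> intro hv <;> rw [hv] at h <;> simpa using h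

theorem nrm_inj (v w : Fin 3 → k) (hv : Nrm v) (hw : Nrm w)
    (hvne : v ≠ 0) (hwne : w ≠ 0)
    (h : Projectivization.mk k v hvne = Projectivization.mk k w hwne) : v = w := by
  obtain ⟨a, ha⟩ := (Projectivization.mk_eq_mk_iff k v w hvne hwne).1 h
  have e0 := congrFun ha 0
  have e1 := congrFun ha 1
  have e2 := congrFun ha 2
  simp only [Units.smul_def, Pi.smul_apply, smul_eq_mul] at e0 e1 e2
  have ha1 : (a : k) = 1 := by
    rcases hv with q | ⟨q, q0⟩ | ⟨q, q0, q1⟩ <;> rcases hw with r | ⟨r, r0⟩ | ⟨r, r0, r1⟩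
    · rw [r, q] at e2; simpa using e2
    · rw [r, q] at e2; simp at e2
    · rw [r, q] at e2; simp at e2
    · rw [r, q] at e2; exact absurd (by simpa using e2) a.ne_zero
    · rw [r0, q0] at e0; simpa using e0
    · rw [r0, q0] at e0; simp at e0
    · rw [r, q] at e2; exact absurd (by simpa using e2) a.ne_zero
    · rw [r0, q0] at e0; exact absurd (by simpa using e0) a.ne_zero
    · rw [r1, q1] at e1; simpa using e1
  rw [← ha, Units.smul_def, ha1, one_smul]

theorem mem_nrm (ω l : k) (v : Fin 3 → k) (hv : v ∈ ZAvec k ω l) : Nrm v := by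
  simp only [ZAvec, Set.mem_insert_iff, Set.mem_singleton_iff] at hv
  rcases hv with rfl|rfl|rfl|rfl|rfl|rfl|rfl|rfl|rfl|rfl|rfl|rfl|rfl|rfl|rfl|rfl|rfl|rfl|rfl|rfl|rfl <;>
    simp [Nrm]

/-- auxiliary map sending a (nonzero) vector to its projective point -/
noncomputable def pmk (k : Type*) [Field k] (v : Fin 3 → k) :
    Projectivization k (Fin 3 → k) :=
  letI : Decidable (v = 0) := Classical.dec _
  if h : v = 0 then
    Projectivization.mk k ![1, 0, 0] (by intro hh; simpa using congrFun hh 0)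
  else Projectivization.mk k v h

end Aux

set_option maxHeartbeats 3200000 in
/-- for `λ ∉ {0,1,ω,ω̄}`, the common zero set in `P²(k)` of the three partial
derivatives of `GA[λ]` is exactly the 21-point set `Z_A(λ)`. -/
theorem zero_set_dGA (k : Type*) [Field k] [IsAlgClosed k] [CharP k 2]
    (ω : k) (hω : ω ^ 2 + ω + 1 = 0) (l : k)
    (h0 : l ≠ 0) (h1 : l ≠ 1) (h2 : l ≠ ω) (h3 : l ≠ ω + 1) :
    {P : Projectivization k (Fin 3 → k) |
        ∀ i : Fin 3, eval P.rep (pderiv i (GA k l)) = 0} = ZApts k ω l ∧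
      (ZApts k ω l).ncard = 21 := by
  have hch : (2:k) = 0 := CharTwo.two_eq_zero
  -- basic disequalities
  have g1 : ω ≠ 0 := by
    intro hh; apply one_ne_zero (α := k); linear_combination hω - (ω + 1) * hh
  have g3 : ω + 1 ≠ 0 := by
    intro hh; apply one_ne_zero (α := k); linear_combination hω - ω * hh
  have g2 : ω ≠ 1 := by
    intro hh; apply one_ne_zero (α := k); linear_combination hω - (ω + 2) * hh - hch
  have g4 : ω + 1 ≠ 1 := by intro hh; exact g1 (by linear_combination hh)
  have g5 : ω ≠ ω + 1 := by
    intro hh; exact one_ne_zero (α := k) (by linear_combination -hh)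
  have f3 : l + 1 ≠ 0 := by intro hh; exact h1 (by linear_combination hh - hch)
  have f4 : l + 1 ≠ 1 := by intro hh; exact h0 (by linear_combination hh)
  have f5 : l ≠ l + 1 := by
    intro hh; exact one_ne_zero (α := k) (by linear_combination -hh)
  constructor
  · ext P
    simp only [Set.mem_setOf_eq]
    constructor
    · intro hP
      have H0 := hP 0; rw [ev0] at H0
      have H1 := hP 1; rw [ev1] at H1
      have H2 := hP 2; rw [ev2] at H2
      by_cases hz : P.rep 2 = 0
      · rw [hz] at H2
        have H2' : P.rep 0 * P.rep 1 * (P.rep 0 + P.rep 1) *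
            (P.rep 0 ^ 2 + P.rep 0 * P.rep 1 + P.rep 1 ^ 2) = 0 := by
          linear_combination H2
        rcases mul_eq_zero.mp H2' with hq3 | hquad
        · rcases mul_eq_zero.mp hq3 with hq2 | hsum
          · rcases mul_eq_zero.mp hq2 with hx | hy
            · -- [0:1:0]
              have hv1 : P.rep 1 ≠ 0 := by
                intro hh
                exact P.rep_nonzero (eq_smul _ 0 0 0 0 (by simpa using hx)
                  (by simpa using hh) (by simpa using hz) |>.trans (by simp))
              exact mem_pts ω l P ![0, 1, 0]
                (by simp only [ZAvec]; exact Set.mem_insert_of_mem _ (Set.mem_insert_of_mem _ (Set.mem_insert_of_mem _ (Set.mem_insert_of_mem _ (Set.mem_insert_of_mem _ (Set.mem_insert_of_mem _ (Set.mem_insert_of_mem _ (Set.mem_insert_of_mem _ (Set.mem_insert_of_mem _ (Set.mem_insert_of_mem _ (Set.mem_insert_of_mem _ (Set.mem_insert _ _))))))))))))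
                (by intro hh; simpa using congrFun hh 1)
                (P.rep 1) hv1
                (eq_smul _ _ _ _ _ (by simp [hx]) (by ring) (by simp [hz]))
            · -- [1:0:0]
              have hv0 : P.rep 0 ≠ 0 := by
                intro hh
                exact P.rep_nonzero (eq_smul _ 0 0 0 0 (by simpa using hh)
                  (by simpa using hy) (by simpa using hz) |>.trans (by simp))
              exact mem_pts ω l P ![1, 0, 0]
                (by simp only [ZAvec]; exact Set.mem_insert_of_mem _ (Set.mem_insert_of_mem _ (Set.mem_insert_of_mem _ (Set.mem_insert_of_mem _ (Set.mem_insert_of_mem _ (Set.mem_insert_of_mem _ (Set.mem_insert_of_mem _ (Set.mem_insert_of_mem _ (Set.mem_insert_of_mem _ (Set.mem_insert_of_mem _ (Set.mem_insert_of_mem _ (Set.mem_insert_of_mem _ (Set.mem_insert_of_mem _ (Set.mem_insert_of_mem _ (Set.mem_insert_of_mem _ (Set.mem_insert_of_mem _ (Set.mem_insert_of_mem _ (Set.mem_insert _ _))))))))))))))))))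
                (by intro hh; simpa using congrFun hh 0)
                (P.rep 0) hv0
                (eq_smul _ _ _ _ _ (by ring) (by simp [hy]) (by simp [hz]))
          · -- [1:1:0]
            have hv0 : P.rep 0 ≠ 0 := by
              intro hh
              have hy : P.rep 1 = 0 := by linear_combination hsum - hh
              exact P.rep_nonzero (eq_smul _ 0 0 0 0 (by simpa using hh)
                (by simpa using hy) (by simpa using hz) |>.trans (by simp))
            exact mem_pts ω l P ![1, 1, 0]
              (by simp only [ZAvec]; exact Set.mem_insert_of_mem _ (Set.mem_insert_of_mem _ (Set.mem_insert_of_mem _ (Set.mem_insert_of_mem _ (Set.mem_insert_of_mem _ (Set.mem_insert_of_mem _ (Set.mem_insert_of_mem _ (Set.mem_insert_of_mem _ (Set.mem_insert_of_mem _ (Set.mem_insert_of_mem _ (Set.mem_insert_of_mem _ (Set.mem_insert_of_mem _ (Set.mem_insert _ _)))))))))))))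
              (by intro hh; simpa using congrFun hh 0)
              (P.rep 0) hv0
              (eq_smul _ _ _ _ _ (by ring)
                (by linear_combination hsum - P.rep 0 * hch)
                (by simp [hz]))
        · -- conic cases [1:ω:0], [1:ω+1:0]
          have hv1 : P.rep 1 ≠ 0 := by
            intro hh
            have hx : P.rep 0 = 0 := by
              have : P.rep 0 ^ 2 = 0 := by linear_combination hquad - (P.rep 0 + P.rep 1) * hh
              exact pow_eq_zero_iff (n := 2) (by norm_num) |>.mp this
            exact P.rep_nonzero (eq_smul _ 0 0 0 0 (by simpa using hx)
              (by simpa using hh) (by simpa using hz) |>.trans (by simp))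
          have hfac : (P.rep 0 + ω * P.rep 1) * (P.rep 0 + (ω + 1) * P.rep 1) = 0 := by
            linear_combination hquad + (P.rep 1 ^ 2) * hω +
              (ω * P.rep 0 * P.rep 1 - P.rep 1 ^ 2) * hch
          rcases mul_eq_zero.mp hfac with hc | hc
          · exact mem_pts ω l P ![1, ω + 1, 0]
              (by simp only [ZAvec]; exact Set.mem_insert_of_mem _ (Set.mem_insert _ _))
              (by intro hh; simpa using congrFun hh 0)
              (ω * P.rep 1) (mul_ne_zero g1 hv1)
              (eq_smul _ _ _ _ _
                (by linear_combination hc - ω * P.rep 1 * hch)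
                (by linear_combination (- P.rep 1) * hω + P.rep 1 * hch)
                (by simp [hz]))
          · exact mem_pts ω l P ![1, ω, 0]
              (by simp only [ZAvec]; exact Set.mem_insert _ _)
              (by intro hh; simpa using congrFun hh 0)
              ((ω + 1) * P.rep 1) (mul_ne_zero g3 hv1)
              (eq_smul _ _ _ _ _
                (by linear_combination hc - (ω + 1) * P.rep 1 * hch)
                (by linear_combination (- P.rep 1) * hω + P.rep 1 * hch)
                (by simp [hz]))
      · -- z ≠ 0 : sixteen points
        obtain ⟨b, hb, hvb⟩ := root4 l (P.rep 1) (P.rep 2) hz H0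
        obtain ⟨a, ha, hva⟩ := root4 l (P.rep 0) (P.rep 2) hz H1
        refine mem_pts ω l P ![a, b, 1] ?_
          (by intro hh; simpa using congrFun hh 2) (P.rep 2) hz
          (eq_smul _ _ _ _ _ (by linear_combination hva) (by linear_combination hvb)
            (by ring))
        rcases ha with rfl | rfl | rfl | rfl <;> rcases hb with rfl | rfl | rfl | rfl
        · simp only [ZAvec]; exact Set.mem_insert_of_mem _ (Set.mem_insert_of_mem _ (Set.mem_insert_of_mem _ (Set.mem_insert_of_mem _ (Set.mem_insert_of_mem _ (Set.mem_insert_of_mem _ (Set.mem_insert_of_mem _ (Set.mem_insert_of_mem _ (Set.mem_insert_of_mem _ (Set.mem_insert_of_mem _ (Set.mem_insert_of_mem _ (Set.mem_insert_of_mem _ (Set.mem_insert_of_mem _ (Set.mem_insert_of_mem _ (Set.mem_insert_of_mem _ (Set.mem_insert_of_mem _ (Set.mem_insert_of_mem _ (Set.mem_insert_of_mem _ (Set.mem_insert_of_mem _ (Set.mem_insert _ _)))))))))))))))))))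
        · simp only [ZAvec]; exact Set.mem_insert_of_mem _ (Set.mem_insert_of_mem _ (Set.mem_insert_of_mem _ (Set.mem_insert_of_mem _ (Set.mem_insert_of_mem _ (Set.mem_insert_of_mem _ (Set.mem_insert_of_mem _ (Set.mem_insert_of_mem _ (Set.mem_insert_of_mem _ (Set.mem_insert_of_mem _ (Set.mem_insert _ _))))))))))
        · simp only [ZAvec]; exact Set.mem_insert_of_mem _ (Set.mem_insert_of_mem _ (Set.mem_insert_of_mem _ (Set.mem_insert_of_mem _ (Set.mem_insert_of_mem _ (Set.mem_insert_of_mem _ (Set.mem_insert_of_mem _ (Set.mem_insert_of_mem _ (Set.mem_insert_of_mem _ (Set.mem_insert _ _)))))))))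
        · simp only [ZAvec]; exact Set.mem_insert_of_mem _ (Set.mem_insert_of_mem _ (Set.mem_insert_of_mem _ (Set.mem_insert_of_mem _ (Set.mem_insert_of_mem _ (Set.mem_insert_of_mem _ (Set.mem_insert_of_mem _ (Set.mem_insert_of_mem _ (Set.mem_insert_of_mem _ (Set.mem_insert_of_mem _ (Set.mem_insert_of_mem _ (Set.mem_insert_of_mem _ (Set.mem_insert_of_mem _ (Set.mem_insert_of_mem _ (Set.mem_insert_of_mem _ (Set.mem_insert _ _)))))))))))))))
        · simp only [ZAvec]; exact Set.mem_insert_of_mem _ (Set.mem_insert_of_mem _ (Set.mem_insert_of_mem _ (Set.mem_insert_of_mem _ (Set.mem_insert_of_mem _ (Set.mem_insert_of_mem _ (Set.mem_insert_of_mem _ (Set.mem_insert_of_mem _ (Set.mem_insert_of_mem _ (Set.mem_insert_of_mem _ (Set.mem_insert_of_mem _ (Set.mem_insert_of_mem _ (Set.mem_insert_of_mem _ (Set.mem_insert_of_mem _ (Set.mem_insert_of_mem _ (Set.mem_insert_of_mem _ (Set.mem_insert_of_mem _ (Set.mem_insert_of_mem _ (Set.mem_insert _ _))))))))))))))))))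
        · simp only [ZAvec]; exact Set.mem_insert_of_mem _ (Set.mem_insert_of_mem _ (Set.mem_insert_of_mem _ (Set.mem_insert_of_mem _ (Set.mem_insert_of_mem _ (Set.mem_insert_of_mem _ (Set.mem_insert_of_mem _ (Set.mem_insert_of_mem _ (Set.mem_insert _ _))))))))
        · simp only [ZAvec]; exact Set.mem_insert_of_mem _ (Set.mem_insert_of_mem _ (Set.mem_insert_of_mem _ (Set.mem_insert_of_mem _ (Set.mem_insert_of_mem _ (Set.mem_insert_of_mem _ (Set.mem_insert_of_mem _ (Set.mem_insert_of_mem _ (Set.mem_insert_of_mem _ (Set.mem_insert_of_mem _ (Set.mem_insert_of_mem _ (Set.mem_insert_of_mem _ (Set.mem_insert_of_mem _ (Set.mem_insert_of_mem _ (Set.mem_insert _ _))))))))))))))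
        · simp only [ZAvec]; exact Set.mem_insert_of_mem _ (Set.mem_insert_of_mem _ (Set.mem_insert_of_mem _ (Set.mem_insert_of_mem _ (Set.mem_insert_of_mem _ (Set.mem_insert_of_mem _ (Set.mem_insert_of_mem _ (Set.mem_insert _ _)))))))
        · simp only [ZAvec]; exact Set.mem_insert_of_mem _ (Set.mem_insert_of_mem _ (Set.mem_insert_of_mem _ (Set.mem_insert_of_mem _ (Set.mem_insert_of_mem _ (Set.mem_insert_of_mem _ (Set.mem_insert_of_mem _ (Set.mem_insert_of_mem _ (Set.mem_insert_of_mem _ (Set.mem_insert_of_mem _ (Set.mem_insert_of_mem _ (Set.mem_insert_of_mem _ (Set.mem_insert_of_mem _ (Set.mem_insert_of_mem _ (Set.mem_insert_of_mem _ (Set.mem_insert_of_mem _ (Set.mem_insert _ _))))))))))))))))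
        · simp only [ZAvec]; exact Set.mem_insert_of_mem _ (Set.mem_insert_of_mem _ (Set.mem_insert_of_mem _ (Set.mem_insert_of_mem _ (Set.mem_insert_of_mem _ (Set.mem_insert_of_mem _ (Set.mem_insert_of_mem _ (Set.mem_insert_of_mem _ (Set.mem_insert_of_mem _ (Set.mem_insert_of_mem _ (Set.mem_insert_of_mem _ (Set.mem_insert_of_mem _ (Set.mem_insert_of_mem _ (Set.mem_insert _ _)))))))))))))
        · simp only [ZAvec]; exact Set.mem_insert_of_mem _ (Set.mem_insert_of_mem _ (Set.mem_insert_of_mem _ (Set.mem_insert_of_mem _ (Set.mem_insert _ _))))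
        · simp only [ZAvec]; exact Set.mem_insert_of_mem _ (Set.mem_insert_of_mem _ (Set.mem_insert_of_mem _ (Set.mem_insert_of_mem _ (Set.mem_insert_of_mem _ (Set.mem_insert _ _)))))
        · simp only [ZAvec]; exact Set.mem_insert_of_mem _ (Set.mem_insert_of_mem _ (Set.mem_insert_of_mem _ (Set.mem_insert_of_mem _ (Set.mem_insert_of_mem _ (Set.mem_insert_of_mem _ (Set.mem_insert_of_mem _ (Set.mem_insert_of_mem _ (Set.mem_insert_of_mem _ (Set.mem_insert_of_mem _ (Set.mem_insert_of_mem _ (Set.mem_insert_of_mem _ (Set.mem_insert_of_mem _ (Set.mem_insert_of_mem _ (Set.mem_insert_of_mem _ (Set.mem_insert_of_mem _ (Set.mem_insert_of_mem _ (Set.mem_insert_of_mem _ (Set.mem_insert_of_mem _ (Set.mem_insert_of_mem _ (Set.mem_singleton _))))))))))))))))))))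
        · simp only [ZAvec]; exact Set.mem_insert_of_mem _ (Set.mem_insert_of_mem _ (Set.mem_insert_of_mem _ (Set.mem_insert_of_mem _ (Set.mem_insert_of_mem _ (Set.mem_insert_of_mem _ (Set.mem_insert _ _))))))
        · simp only [ZAvec]; exact Set.mem_insert_of_mem _ (Set.mem_insert_of_mem _ (Set.mem_insert_of_mem _ (Set.mem_insert _ _)))
        · simp only [ZAvec]; exact Set.mem_insert_of_mem _ (Set.mem_insert_of_mem _ (Set.mem_insert _ _))
    · rintro ⟨w, hmem, hw, rfl⟩
      intro i
      obtain ⟨a, haw⟩ :=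
        (Projectivization.mk_eq_mk_iff k _ _ (Projectivization.rep_nonzero _) hw).1
          (Projectivization.mk_rep (Projectivization.mk k w hw))
      rw [← haw]
      exact good_smul l (a : k) w (good_mem ω l hω w hmem) i
  · -- cardinality
    have himg : ZApts k ω l = pmk k '' ZAvec k ω l := by
      ext Q
      constructor
      · rintro ⟨v, hvm, hvne, rfl⟩
        exact ⟨v, hvm, by rw [pmk, dif_neg hvne]⟩
      · rintro ⟨v, hvm, rfl⟩
        have hvne := nrm_ne_zero v (mem_nrm ω l v hvm)
        exact ⟨v, hvm, hvne, by rw [pmk, dif_neg hvne]⟩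
    have hinj : Set.InjOn (pmk k) (ZAvec k ω l) := by
      intro v hv w hw hvw
      have hvne := nrm_ne_zero v (mem_nrm ω l v hv)
      have hwne := nrm_ne_zero w (mem_nrm ω l w hw)
      rw [pmk, pmk, dif_neg hvne, dif_neg hwne] at hvw
      exact nrm_inj v w (mem_nrm ω l v hv) (mem_nrm ω l w hw) hvne hwne hvw
    rw [himg, Set.ncard_image_of_injOn hinj, ZAvec]
    iterate 20 rw [Set.ncard_insert_of_notMem
      (by simp [funext_iff, Fin.forall_fin_succ, h0, h1, f3, f4, f5, g1, g2, g3, g4, g5,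
        h0.symm, h1.symm, f3.symm, f4.symm, f5.symm, g1.symm, g2.symm, g3.symm, g4.symm,
        g5.symm])
      (Set.toFinite _)]
    rw [Set.ncard_singleton]
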